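/- arXiv:1004.1369 — 3 statements merged into one kernel-verified Lean document; each statement's English description precedes it below -/
import Mathlib

section
/- In the first Heisenberg group ℍ¹ = ℝ²×ℝ with group law [z,t]·[z',t'] = [z+z', t+t'+2(x₂x₁'−x₁x₂')] and homogeneous norm ‖[z,t]‖∞ = max(‖z‖, |t|^{1/2}), the point x = [0,1] lies on the boundary of the closed unit ball B = {p : ‖p‖∞ ≤ 1}, and for every y ∈ B one has d∞(x,y) ≤ √2 < 2 = diam B, where d∞(x,y) = ‖x⁻¹·y‖∞. -/
noncomputable section

/-- Points of the first Heisenberg group: `((x₁,x₂),t)`. -/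
abbrev Heis := (ℝ × ℝ) × ℝ

/-- Group law `[z,t]·[z',t'] = [z+z', t+t'+2(x₂x₁'−x₁x₂')]`. -/
def Hmul (p q : Heis) : Heis :=
  ((p.1.1 + q.1.1, p.1.2 + q.1.2),
    p.2 + q.2 + 2 * (p.1.2 * q.1.1 - p.1.1 * q.1.2))

/-- Group inverse `[z,t]⁻¹ = [−z,−t]`. -/
def Hinv (p : Heis) : Heis := ((-p.1.1, -p.1.2), -p.2)

/-- Homogeneous norm `‖[z,t]‖∞ = max(‖z‖, |t|^{1/2})`. -/
def Hnorm (p : Heis) : ℝ :=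
  max (Real.sqrt (p.1.1 ^ 2 + p.1.2 ^ 2)) (Real.sqrt |p.2|)

/-- The distance `d∞(p,q) = ‖p⁻¹·q‖∞`. -/
def Hdist (p q : Heis) : ℝ := Hnorm (Hmul (Hinv p) q)

/-!
Lagrange's identity bounds the symplectic term by `|z| |z'|`, which makes `‖·‖∞` subadditive:
`‖p·q‖∞ ≤ ‖p‖∞ + ‖q‖∞`. Hence `d∞(p,q) ≤ ‖p‖∞ + ‖q‖∞ ≤ 2` on `B`, with equality for
`[(±1,0),0]`.
Seen from the pole `x = [0,1]` there is no symplectic term, `x⁻¹·y = [z, t - 1]`, so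
`d∞(x,y) ≤ max(1, √2)`. The pole lies on the frontier of `B` because the dilations
`[z,t] ↦ [s z, s² t]` scale the norm by `s`, and push it out of `B` for `s > 1`.
-/

open Filter Topology

theorem Hnorm_nonneg (p : Heis) : 0 ≤ Hnorm p :=
  le_max_of_le_left (Real.sqrt_nonneg _)

theorem Hnorm_le_iff {p : Heis} {r : ℝ} (hr : 0 ≤ r) :
    Hnorm p ≤ r ↔ p.1.1 ^ 2 + p.1.2 ^ 2 ≤ r ^ 2 ∧ |p.2| ≤ r ^ 2 := by
  simp only [Hnorm, max_le_iff, Real.sqrt_le_left hr]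

theorem Hnorm_Hinv (p : Heis) : Hnorm (Hinv p) = Hnorm p := by
  simp [Hnorm, Hinv]

theorem Hnorm_Hmul_le (p q : Heis) : Hnorm (Hmul p q) ≤ Hnorm p + Hnorm q := by
  obtain ⟨⟨x, y⟩, t⟩ := p
  obtain ⟨⟨x', y'⟩, t'⟩ := q
  have ha := Hnorm_nonneg ((x, y), t)
  have hb := Hnorm_nonneg ((x', y'), t')
  obtain ⟨hz, ht⟩ := (Hnorm_le_iff ha).1 le_rfl
  obtain ⟨hz', ht'⟩ := (Hnorm_le_iff hb).1 le_rfl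
  set a := Hnorm ((x, y), t)
  set b := Hnorm ((x', y'), t')
  have lagrange : (x * x' + y * y') ^ 2 + (y * x' - x * y') ^ 2 =
      (x ^ 2 + y ^ 2) * (x' ^ 2 + y' ^ 2) := by
    ring
  have hprod : (x ^ 2 + y ^ 2) * (x' ^ 2 + y' ^ 2) ≤ (a * b) ^ 2 :=
    (mul_le_mul hz hz' (by positivity) (by positivity)).trans_eq (mul_pow a b 2).symm
  have hdot : x * x' + y * y' ≤ a * b :=
    (le_abs_self _).trans <|
      abs_le_of_sq_le_sq (by nlinarith [sq_nonneg (y * x' - x * y')]) (by positivity)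
  have hcross : |y * x' - x * y'| ≤ a * b :=
    abs_le_of_sq_le_sq (by nlinarith [sq_nonneg (x * x' + y * y')]) (by positivity)
  rw [Hnorm_le_iff (by positivity)]
  constructor
  · dsimp only [Hmul]
    nlinarith
  · calc |t + t' + 2 * (y * x' - x * y')| ≤ |t| + |t'| + 2 * |y * x' - x * y'| := by
          grw [abs_add_le, abs_add_le, abs_mul, abs_two]
      _ ≤ (a + b) ^ 2 := by nlinarith

theorem Hdist_le_add (p q : Heis) : Hdist p q ≤ Hnorm p + Hnorm q :=
  (Hnorm_Hmul_le _ _).trans_eq (by rw [Hnorm_Hinv])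

def Hdil (s : ℝ) (p : Heis) : Heis := ((s * p.1.1, s * p.1.2), s ^ 2 * p.2)

theorem Hnorm_Hdil {s : ℝ} (hs : 0 ≤ s) (p : Heis) : Hnorm (Hdil s p) = s * Hnorm p := by
  have hz : (s * p.1.1) ^ 2 + (s * p.1.2) ^ 2 = s ^ 2 * (p.1.1 ^ 2 + p.1.2 ^ 2) := by ring
  simp only [Hnorm, Hdil, hz, abs_mul, abs_sq, Real.sqrt_mul (sq_nonneg s), Real.sqrt_sq hs,
    mul_max_of_nonneg _ _ hs]

theorem mem_frontier_of_Hnorm_eq_one {p : Heis} (hp : Hnorm p = 1) :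
    p ∈ frontier {q : Heis | Hnorm q ≤ 1} := by
  rw [frontier_eq_closure_inter_closure]
  refine ⟨subset_closure hp.le, ?_⟩
  have hcont : Continuous (Hdil · p) := by unfold Hdil; fun_prop
  have hlim : Tendsto (Hdil · p) (𝓝[>] 1) (𝓝 p) := by
    simpa [Hdil] using (hcont.tendsto 1).mono_left nhdsWithin_le_nhds
  refine mem_closure_of_tendsto hlim ?_
  filter_upwards [self_mem_nhdsWithin] with s (hs : 1 < s)
  simp [Hnorm_Hdil (zero_le_one.trans hs.le), hp, hs]

theorem Hdist_north_pole_le_sqrt_two {y : Heis} (hy : Hnorm y ≤ 1) :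
    Hdist ((0, 0), 1) y ≤ Real.sqrt 2 := by
  obtain ⟨hz, ht⟩ := (Hnorm_le_iff zero_le_one).1 hy
  have hpole : Hmul (Hinv ((0, 0), 1)) y = (y.1, y.2 - 1) := by
    simp [Hmul, Hinv, sub_eq_neg_add]
  rw [Hdist, hpole, Hnorm_le_iff (Real.sqrt_nonneg 2), Real.sq_sqrt zero_le_two]
  constructor
  · linarith
  · rw [abs_le] at ht ⊢
    constructor <;> linarith

/-- the point `x = [0,1]` lies on the boundary of the closed unit ball
`B = {p : ‖p‖∞ ≤ 1}`, every `y ∈ B` satisfies `d∞(x,y) ≤ √2 < 2`, and `2` is the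
diameter of `B` (the greatest value of `d∞` between points of `B`). -/
theorem heisenberg_ball_not_isodiametric :
    let B : Set Heis := {p | Hnorm p ≤ 1}
    let x : Heis := ((0, 0), 1)
    x ∈ frontier B ∧
    (∀ y ∈ B, Hdist x y ≤ Real.sqrt 2) ∧
    Real.sqrt 2 < 2 ∧
    IsGreatest {r : ℝ | ∃ p ∈ B, ∃ q ∈ B, Hdist p q = r} 2 := by
  intro B x
  refine ⟨mem_frontier_of_Hnorm_eq_one (by simp [x, Hnorm]),
    fun y hy ↦ Hdist_north_pole_le_sqrt_two hy, (Real.sqrt_lt' two_pos).2 (by norm_num), ?_, ?_⟩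
  · refine ⟨((-1, 0), 0), by simp [B, Hnorm], ((1, 0), 0), by simp [B, Hnorm], ?_⟩
    norm_num [Hdist, Hmul, Hinv, Hnorm]
  · rintro _ ⟨p, hp, q, hq, rfl⟩
    exact (Hdist_le_add p q).trans ((add_le_add hp hq).trans_eq one_add_one_eq_two)
end
end

section
/- Let (G,d) be a proper metric space (closed bounded sets compact) carrying a transitive family of isometries (left translations) and dilations δ_λ with d(δ_λ x, δ_λ y) = λ d(x,y), and let 𝒮^Q be the Q-dimensional spherical Hausdorff measure. If 𝒮^Q is upper semicontinuous on compact sets with respect to Hausdorff convergence and 0 < 𝒮^Q(B) < ∞ for balls, then there exists a compact set E with diam E = 1 achieving sup{ 𝒮^Q(A) : diam A = 1 }. -/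
/-! Translating a set of diameter `1` into a fixed closed ball turns a maximizing sequence for
`sup {𝒮^Q(A) : diam A = 1}` into a sequence of compact sets in a compact set, hence (Blaschke)
a subsequence converges in the Hausdorff metric to a compact `E`. The diameter is
`2`-Lipschitz for the Hausdorff distance, so `diam E = 1`, and upper semicontinuity of `𝒮^Q`
makes `E` a maximizer. The supremum is over a nonempty family because a dilation rescales two
distinct points, which exist since `𝒮^Q` of a point vanishes while that of a ball does not. -/

noncomputable section

open ENNReal Filter Metric

variable {G : Type*} [MetricSpace G]

/-- `δ`-approximating `Q`-dimensional spherical Hausdorff premeasure. -/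
def sphericalPre (Q : ℝ) (δ : ℝ≥0∞) (A : Set G) : ℝ≥0∞ :=
  ⨅ (t : ℕ → Set G) (_ : A ⊆ ⋃ i, t i)
    (_ : ∀ i, (∃ x r, t i = Metric.closedBall x r) ∧ EMetric.diam (t i) ≤ δ),
    ∑' i, EMetric.diam (t i) ^ Q

/-- `Q`-dimensional spherical Hausdorff measure `𝒮^Q`. -/
def sphericalM (Q : ℝ) (A : Set G) : ℝ≥0∞ :=
  ⨆ (δ : ℝ≥0∞) (_ : 0 < δ), sphericalPre Q δ A

open TopologicalSpace

lemma sphericalPre_mono (Q : ℝ) (d : ℝ≥0∞) {A B : Set G} (h : A ⊆ B) :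
    sphericalPre Q d A ≤ sphericalPre Q d B :=
  le_iInf fun t => le_iInf fun htB => le_iInf fun hc =>
    iInf_le_of_le t (iInf_le_of_le (h.trans htB) (iInf_le _ hc))

lemma sphericalM_mono (Q : ℝ) {A B : Set G} (h : A ⊆ B) :
    sphericalM Q A ≤ sphericalM Q B :=
  iSup_mono fun d => iSup_mono fun _ => sphericalPre_mono Q d h

lemma sphericalPre_singleton {Q : ℝ} (hQ : 0 < Q) (d : ℝ≥0∞) (x : G) :
    sphericalPre Q d {x} = 0 := by
  have hdiam : EMetric.diam ({x} : Set G) = 0 := ediam_singleton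
  refine le_antisymm (iInf_le_of_le (fun _ => closedBall x 0) ?_) zero_le
  refine iInf_le_of_le (by simp) <|
    iInf_le_of_le (fun _ => ⟨⟨x, 0, rfl⟩, by simp [hdiam]⟩) ?_
  simp [hdiam, hQ]

lemma sphericalM_singleton {Q : ℝ} (hQ : 0 < Q) (x : G) : sphericalM Q {x} = 0 := by
  simp [sphericalM, sphericalPre_singleton hQ]

lemma exists_diam_eq_one_of_dilation {δ : ℝ → G → G}
    (hδ : ∀ l : ℝ, 0 < l → ∀ x y : G, dist (δ l x) (δ l y) = l * dist x y) {p q : G}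
    (hpq : p ≠ q) : ∃ A : Set G, diam A = 1 := by
  have hd : 0 < dist p q := dist_pos.2 hpq
  refine ⟨{δ (dist p q)⁻¹ p, δ (dist p q)⁻¹ q}, ?_⟩
  rw [diam_pair, hδ _ (inv_pos.2 hd), inv_mul_cancel₀ hd.ne']

lemma nonempty_of_diam_pos {A : Set G} (hA : 0 < diam A) : A.Nonempty :=
  Set.nonempty_iff_ne_empty.2 fun h => by simp [h] at hA

lemma isBounded_of_diam_pos {A : Set G} (hA : 0 < diam A) : Bornology.IsBounded A := by
  by_contra h
  simp [diam_eq_zero_of_unbounded h] at hA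

lemma exists_nonemptyCompacts_subset_closedBall [ProperSpace G] {Q : ℝ}
    (htrans : ∀ x y : G, ∃ f : G → G, Isometry f ∧ f x = y ∧
      ∀ A : Set G, sphericalM Q (f '' A) = sphericalM Q A)
    {A : Set G} (hA : 0 < diam A) (x : G) :
    ∃ K : NonemptyCompacts G, (K : Set G) ⊆ closedBall x (diam A) ∧
      diam (K : Set G) = diam A ∧ sphericalM Q A ≤ sphericalM Q (K : Set G) := by
  obtain ⟨a, ha⟩ := nonempty_of_diam_pos hA
  have hAb := isBounded_of_diam_pos hA
  obtain ⟨f, hf, rfl, hfS⟩ := htrans a x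
  refine ⟨⟨⟨f '' closure A, hAb.isCompact_closure.image hf.continuous⟩,
    ⟨f a, Set.mem_image_of_mem f (subset_closure ha)⟩⟩, ?_, ?_, ?_⟩
  · rintro _ ⟨y, hy, rfl⟩
    rw [mem_closedBall, hf.dist_eq, ← diam_closure]
    exact dist_le_diam_of_mem hAb.closure hy (subset_closure ha)
  · exact (hf.diam_image _).trans (diam_closure A)
  · exact (sphericalM_mono Q subset_closure).trans (hfS _).ge

lemma diam_le_diam_add_hausdorffDist {s t : Set G} (ht : IsCompact t) (hne : t.Nonempty)
    (hfin : hausdorffEDist s t ≠ ⊤) :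
    diam s ≤ diam t + 2 * hausdorffDist s t := by
  refine diam_le_of_forall_dist_le
    (add_nonneg diam_nonneg (mul_nonneg zero_le_two hausdorffDist_nonneg)) fun x hx y hy => ?_
  obtain ⟨x', hx', hxx'⟩ := ht.exists_infDist_eq_dist hne x
  obtain ⟨y', hy', hyy'⟩ := ht.exists_infDist_eq_dist hne y
  have hx := infDist_le_hausdorffDist_of_mem hx hfin
  have hy := infDist_le_hausdorffDist_of_mem hy hfin
  have hxy := dist_le_diam_of_mem ht.isBounded hx' hy'
  calc dist x y ≤ dist x x' + dist x' y' + dist y y' := by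
        rw [dist_comm y y']; exact dist_triangle4 x x' y' y
    _ ≤ diam t + 2 * hausdorffDist s t := by linarith

namespace TopologicalSpace.NonemptyCompacts

lemma lipschitzWith_diam : LipschitzWith 2 fun K : NonemptyCompacts G => diam (K : Set G) :=
  LipschitzWith.of_le_add_mul 2 fun K L =>
    diam_le_diam_add_hausdorffDist L.isCompact L.nonempty (edist_ne_top K L)

lemma exists_subseq_tendsto_of_subset [CompleteSpace G] {s : Set G} (hs : IsCompact s)
    (K : ℕ → NonemptyCompacts G) (hK : ∀ n, (K n : Set G) ⊆ s) :
    ∃ B : NonemptyCompacts G, ∃ φ : ℕ → ℕ,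
      StrictMono φ ∧ Tendsto (K ∘ φ) atTop (nhds B) := by
  have hcpt := (totallyBounded_subsets_of_totallyBounded hs.totallyBounded).closure
    |>.isCompact_of_isClosed isClosed_closure
  obtain ⟨B, -, φ, hφ, hB⟩ := hcpt.tendsto_subseq fun n => subset_closure (hK n)
  exact ⟨B, φ, hφ, hB⟩

end TopologicalSpace.NonemptyCompacts

lemma exists_seq_tendsto_biSup {α ι : Type*} [CompleteLinearOrder α] [TopologicalSpace α]
    [OrderTopology α] [FirstCountableTopology α] {p : ι → Prop} (f : ι → α)
    (h : ∃ i, p i) :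
    ∃ x : ℕ → ι, (∀ n, p (x n)) ∧
      Tendsto (f ∘ x) atTop (nhds (⨆ (i) (_ : p i), f i)) := by
  obtain ⟨i, hi⟩ := h
  obtain ⟨u, -, hu, hmem⟩ :=
    exists_seq_tendsto_sSup (S := f '' {i | p i}) ⟨f i, i, hi, rfl⟩ (OrderTop.bddAbove _)
  choose x hx hfx using hmem
  have hS : sSup (f '' {i | p i}) = ⨆ (i) (_ : p i), f i := sSup_image
  refine ⟨x, hx, ?_⟩
  rw [← hS]
  exact hu.congr fun n => (hfx n).symm

/-- existence of isodiametric sets. In a proper metric space with a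
transitive family of isometries preserving `𝒮^Q` and dilations scaling the
distance, if `𝒮^Q` is upper semicontinuous on compact sets under Hausdorff
convergence and is positive and finite on closed balls of positive radius, then
some compact set of diameter `1` achieves `sup{𝒮^Q(A) : diam A = 1}`. -/
theorem isodiametric_sets_exist [ProperSpace G] [Nonempty G] (Q : ℝ) (hQ : 0 < Q)
    (htrans : ∀ x y : G, ∃ f : G → G, Isometry f ∧ f x = y ∧
      ∀ A : Set G, sphericalM Q (f '' A) = sphericalM Q A)
    (δ : ℝ → G → G)
    (hδ : ∀ l : ℝ, 0 < l → ∀ x y : G, dist (δ l x) (δ l y) = l * dist x y)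
    (husc : ∀ (A : ℕ → Set G) (B : Set G), (∀ i, IsCompact (A i)) →
      (∀ i, (A i).Nonempty) → IsCompact B → B.Nonempty →
      Tendsto (fun i => Metric.hausdorffDist (A i) B) atTop (nhds 0) →
      Filter.limsup (fun i => sphericalM Q (A i)) atTop ≤ sphericalM Q B)
    (hball : ∀ (x : G) (r : ℝ), 0 < r →
      0 < sphericalM Q (closedBall x r) ∧ sphericalM Q (closedBall x r) < ⊤) :
    ∃ E : Set G, IsCompact E ∧ Metric.diam E = 1 ∧
      sphericalM Q E = ⨆ (A : Set G) (_ : Metric.diam A = 1), sphericalM Q A := by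
  obtain ⟨x₀⟩ := ‹Nonempty G›
  obtain ⟨p, q, hpq⟩ : ∃ p q : G, p ≠ q := by
    by_contra! h
    have hball₀ : closedBall x₀ 1 = {x₀} :=
      Set.eq_singleton_iff_unique_mem.2 ⟨by simp, fun y _ => h y x₀⟩
    simpa [hball₀, sphericalM_singleton hQ] using (hball x₀ 1 one_pos).1
  obtain ⟨A, hA, hAS⟩ := exists_seq_tendsto_biSup (sphericalM Q)
    (exists_diam_eq_one_of_dilation hδ hpq)
  choose K hKsub hKdiam hAK using fun n =>
    exists_nonemptyCompacts_subset_closedBall htrans ((hA n).symm ▸ one_pos : 0 < diam (A n)) x₀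
  simp only [hA] at hKsub hKdiam
  obtain ⟨B, φ, hφ, hKB⟩ :=
    NonemptyCompacts.exists_subseq_tendsto_of_subset (isCompact_closedBall x₀ 1) K hKsub
  have hBdiam : diam (B : Set G) = 1 :=
    tendsto_nhds_unique ((NonemptyCompacts.lipschitzWith_diam.continuous.tendsto B).comp hKB)
      (by simp only [Function.comp_def, hKdiam, tendsto_const_nhds])
  have hle : ∀ {E : Set G}, diam E = 1 →
      sphericalM Q E ≤ ⨆ (A : Set G) (_ : diam A = 1), sphericalM Q A :=
    fun hE => le_iSup₂ (f := fun (A : Set G) (_ : diam A = 1) => sphericalM Q A) _ hE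
  have hKS := tendsto_of_tendsto_of_tendsto_of_le_of_le (hAS.comp hφ.tendsto_atTop)
    tendsto_const_nhds (fun n => hAK (φ n)) fun n => hle (hKdiam (φ n))
  refine ⟨B, B.isCompact, hBdiam, le_antisymm (hle hBdiam) ?_⟩
  rw [← hKS.limsup_eq]
  exact husc _ _ (fun n => (K (φ n)).isCompact) (fun n => (K (φ n)).nonempty) B.isCompact
    B.nonempty (tendsto_iff_dist_tendsto_zero.1 hKB)
end
end

section
/- Let A be a compact subset of the first Heisenberg group (ℝ²×ℝ with group law [z,t]·[z',t'] = [z+z', t+t'+2(x₂x₁'−x₁x₂')]) with diameter 2 for the distance d∞(p,q) = ‖p⁻¹·q‖∞, ‖[z,t]‖∞ = max(‖z‖,|t|^{1/2}). Then the 3-dimensional Lebesgue measure of A satisfies ℒ³(A) ≤ 4π, i.e., ℒ³(A) ≤ 4·ℒ²(U) where U is the closed unit Euclidean disc in ℝ². -/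
/-!
The projection `[z, t] ↦ z` does not increase `d∞`, so the projection of `A` is a planar set of
Euclidean diameter at most `2` and, by the planar isodiametric inequality, has area at most `π`;
two points `[z, t]`, `[z, t']` of one vertical fibre are at distance `|t - t'|^{1/2}`, so every
fibre has length at most `4`, and Fubini gives `ℒ³(A) ≤ 4π`.

The planar inequality is proved in polar coordinates around a lowest point of the set: the set
lies in the upper half-plane, and points on two perpendicular rays at radii `ρ` and `σ` are at
distance `√(ρ² + σ²)`, so pairing each direction `θ ∈ [0, π/2]` with `θ + π/2` bounds the sum of
the two radial integrals `∫ ρ dρ` by `d² / 2`.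
-/

noncomputable section

open MeasureTheory

/-- The diameter of a set with respect to `d∞`. -/
def HdiamSet (A : Set Heis) : ℝ := sSup {r : ℝ | ∃ p ∈ A, ∃ q ∈ A, r = Hdist p q}

open Set Real ENNReal

lemma setLIntegral_ofReal_le_of_subset_Iic {M : Set ℝ} {a : ℝ} (ha : 0 ≤ a) (hM : M ⊆ Iic a) :
    ∫⁻ ρ in M, ENNReal.ofReal ρ ≤ ENNReal.ofReal (a ^ 2 / 2) := by
  have hneg : ∫⁻ ρ in Iio 0, ENNReal.ofReal ρ = 0 := by
    rw [setLIntegral_congr_fun measurableSet_Iio fun ρ hρ => ofReal_of_nonpos hρ.le,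
      lintegral_zero]
  have hpos : ∫⁻ ρ in Icc 0 a, ENNReal.ofReal ρ = ENNReal.ofReal (a ^ 2 / 2) := by
    have hint : IntegrableOn (fun ρ : ℝ => ρ) (Icc 0 a) := continuous_id.integrableOn_Icc
    rw [← ofReal_integral_eq_lintegral_ofReal hint
      ((ae_restrict_iff' measurableSet_Icc).2 (Filter.Eventually.of_forall fun ρ hρ => hρ.1)),
      integral_Icc_eq_integral_Ioc, ← intervalIntegral.integral_of_le ha, integral_id]
    ring_nf
  calc ∫⁻ ρ in M, ENNReal.ofReal ρ
      ≤ ∫⁻ ρ in Iio 0 ∪ Icc 0 a, ENNReal.ofReal ρ :=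
        lintegral_mono_set fun ρ hρ => (lt_or_ge ρ 0).imp id fun h => ⟨h, hM hρ⟩
    _ ≤ (∫⁻ ρ in Iio 0, ENNReal.ofReal ρ) + ∫⁻ ρ in Icc 0 a, ENNReal.ofReal ρ :=
        lintegral_union_le _ _ _
    _ = ENNReal.ofReal (a ^ 2 / 2) := by rw [hneg, hpos, zero_add]

lemma setLIntegral_ofReal_add_le_of_sq_add_sq_le {M N : Set ℝ} {c : ℝ} (hM : 0 ∈ M)
    (hN : 0 ∈ N) (h : ∀ ρ ∈ M, ∀ σ ∈ N, ρ ^ 2 + σ ^ 2 ≤ c) :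
    (∫⁻ ρ in M, ENNReal.ofReal ρ) + ∫⁻ σ in N, ENNReal.ofReal σ ≤ ENNReal.ofReal (c / 2) := by
  have hMbdd : BddAbove M :=
    ⟨√c, fun ρ hρ => Real.le_sqrt_of_sq_le (by nlinarith [h ρ hρ 0 hN])⟩
  set a := sSup M
  have ha : 0 ≤ a := le_csSup hMbdd hM
  have hNa : ∀ σ ∈ N, σ ^ 2 ≤ c - a ^ 2 := by
    intro σ hσ
    have ha_le : a ≤ √(c - σ ^ 2) :=
      csSup_le ⟨0, hM⟩ fun ρ hρ => Real.le_sqrt_of_sq_le (by linarith [h ρ hρ σ hσ])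
    have ha_sq := (Real.le_sqrt ha (by nlinarith [h 0 hM σ hσ])).1 ha_le
    linarith
  have hca : 0 ≤ c - a ^ 2 := by simpa using hNa 0 hN
  calc (∫⁻ ρ in M, ENNReal.ofReal ρ) + ∫⁻ σ in N, ENNReal.ofReal σ
      ≤ ENNReal.ofReal (a ^ 2 / 2) + ENNReal.ofReal (√(c - a ^ 2) ^ 2 / 2) :=
        add_le_add (setLIntegral_ofReal_le_of_subset_Iic ha fun ρ hρ => le_csSup hMbdd hρ)
          (setLIntegral_ofReal_le_of_subset_Iic (Real.sqrt_nonneg _)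
            fun σ hσ => Real.le_sqrt_of_sq_le (hNa σ hσ))
    _ = ENNReal.ofReal (c / 2) := by
        rw [Real.sq_sqrt hca, ← ofReal_add (by positivity) (by positivity)]
        ring_nf

lemma sq_dist_polarCoord_symm_add_pi_div_two (ρ σ θ : ℝ) :
    ((polarCoord.symm (ρ, θ)).1 - (polarCoord.symm (σ, θ + π / 2)).1) ^ 2
      + ((polarCoord.symm (ρ, θ)).2 - (polarCoord.symm (σ, θ + π / 2)).2) ^ 2
      = ρ ^ 2 + σ ^ 2 := by
  simp only [polarCoord_symm_apply, cos_add_pi_div_two, sin_add_pi_div_two]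
  linear_combination (ρ ^ 2 + σ ^ 2) * sin_sq_add_cos_sq θ

lemma volume_le_lintegral_lintegral_polarCoord_symm {K : Set (ℝ × ℝ)} (hK : MeasurableSet K) :
    volume K ≤ ∫⁻ θ in Ioo (-π) π, ∫⁻ ρ in (fun ρ => polarCoord.symm (ρ, θ)) ⁻¹' K,
      ENNReal.ofReal ρ := by
  have hmeas : Measurable fun p : ℝ × ℝ =>
      ENNReal.ofReal p.1 • (K.indicator 1 (polarCoord.symm p) : ℝ≥0∞) := by
    have : Measurable (K.indicator (1 : ℝ × ℝ → ℝ≥0∞)) := measurable_one.indicator hK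
    fun_prop
  calc volume K
      = ∫⁻ p in polarCoord.target, ENNReal.ofReal p.1 • K.indicator 1 (polarCoord.symm p) := by
        rw [lintegral_comp_polarCoord_symm, lintegral_indicator_one hK]
    _ = ∫⁻ θ in Ioo (-π) π, ∫⁻ ρ in Ioi 0,
          ENNReal.ofReal ρ • K.indicator 1 (polarCoord.symm (ρ, θ)) := by
        rw [polarCoord_target, Measure.volume_eq_prod, ← Measure.prod_restrict,
          lintegral_prod_symm _ hmeas.aemeasurable]
    _ ≤ _ := by
        refine lintegral_mono fun θ => (setLIntegral_le_lintegral _ _).trans_eq ?_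
        have hM : MeasurableSet ((fun ρ => polarCoord.symm (ρ, θ)) ⁻¹' K) :=
          hK.preimage (continuous_polarCoord_symm.comp (Continuous.prodMk_left θ)).measurable
        rw [← lintegral_indicator hM]
        congr 1 with ρ
        by_cases hρ : polarCoord.symm (ρ, θ) ∈ K
        · rw [indicator_of_mem hρ, indicator_of_mem (show ρ ∈ _ from hρ), Pi.one_apply,
            smul_eq_mul, mul_one]
        · rw [indicator_of_notMem hρ, indicator_of_notMem (show ρ ∉ _ from hρ), smul_zero]

lemma volume_le_of_zero_mem_of_forall_nonneg_snd {K : Set (ℝ × ℝ)} {d : ℝ}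
    (hK : MeasurableSet K) (h0 : 0 ∈ K) (hup : ∀ x ∈ K, 0 ≤ x.2)
    (hd : ∀ a ∈ K, ∀ b ∈ K, (a.1 - b.1) ^ 2 + (a.2 - b.2) ^ 2 ≤ d ^ 2) :
    volume K ≤ ENNReal.ofReal (π * d ^ 2 / 4) := by
  set M : ℝ → Set ℝ := fun θ => (fun ρ => polarCoord.symm (ρ, θ)) ⁻¹' K
  set F : ℝ → ℝ≥0∞ := fun θ => ∫⁻ ρ in M θ, ENNReal.ofReal ρ
  have hF_lower : ∀ θ ∈ Ioo (-π) 0, F θ = 0 := by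
    refine fun θ hθ => le_antisymm ?_ bot_le
    have hsin : sin θ < 0 := sin_neg_of_neg_of_neg_pi_lt hθ.2 hθ.1
    have hM : M θ ⊆ Iic 0 := fun ρ hρ => by
      have hρ_up := hup _ hρ
      simp only [polarCoord_symm_apply] at hρ_up
      exact nonpos_of_mul_nonneg_left hρ_up hsin
    simpa using setLIntegral_ofReal_le_of_subset_Iic le_rfl hM
  have hF_pair : ∀ θ, F θ + F (θ + π / 2) ≤ ENNReal.ofReal (d ^ 2 / 2) := by
    have hM0 : ∀ θ, 0 ∈ M θ := fun θ => by
      simp only [M, mem_preimage, polarCoord_symm_apply, zero_mul]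
      exact h0
    refine fun θ => setLIntegral_ofReal_add_le_of_sq_add_sq_le (hM0 θ) (hM0 _)
      fun ρ hρ σ hσ => ?_
    rw [← sq_dist_polarCoord_symm_add_pi_div_two ρ σ θ]
    exact hd _ hρ _ hσ
  have hshift : ∫⁻ θ in Icc (π / 2) π, F θ = ∫⁻ θ in Icc 0 (π / 2), F (θ + π / 2) := by
    rw [← (measurePreserving_add_right volume (π / 2)).setLIntegral_comp_preimage_emb
      (measurableEmbedding_addRight (π / 2)), preimage_add_const_Icc]
    ring_nf
  have hcover : Ioo (-π) π ⊆ Ioo (-π) 0 ∪ (Icc 0 (π / 2) ∪ Icc (π / 2) π) := by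
    intro θ hθ
    rcases lt_or_ge θ 0 with hneg | hnonneg
    · exact Or.inl ⟨hθ.1, hneg⟩
    · rcases le_total θ (π / 2) with h | h
      · exact Or.inr (Or.inl ⟨hnonneg, h⟩)
      · exact Or.inr (Or.inr ⟨h, hθ.2.le⟩)
  calc volume K ≤ ∫⁻ θ in Ioo (-π) π, F θ := volume_le_lintegral_lintegral_polarCoord_symm hK
    _ ≤ (∫⁻ θ in Ioo (-π) 0, F θ)
          + ((∫⁻ θ in Icc 0 (π / 2), F θ) + ∫⁻ θ in Icc (π / 2) π, F θ) :=
        (lintegral_mono_set hcover).trans <|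
          (lintegral_union_le _ _ _).trans (add_le_add le_rfl (lintegral_union_le _ _ _))
    _ ≤ ∫⁻ θ in Icc 0 (π / 2), (F θ + F (θ + π / 2)) := by
        rw [setLIntegral_congr_fun measurableSet_Ioo hF_lower, lintegral_zero, zero_add, hshift]
        exact le_lintegral_add _ _
    _ ≤ ∫⁻ θ in Icc 0 (π / 2), ENNReal.ofReal (d ^ 2 / 2) := lintegral_mono hF_pair
    _ = ENNReal.ofReal (π * d ^ 2 / 4) := by
        rw [setLIntegral_const, Real.volume_Icc, ← ofReal_mul (by positivity)]
        ring_nf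

lemma volume_le_of_sq_dist_le {S : Set (ℝ × ℝ)} {d : ℝ} (hS : IsCompact S)
    (hd : ∀ a ∈ S, ∀ b ∈ S, (a.1 - b.1) ^ 2 + (a.2 - b.2) ^ 2 ≤ d ^ 2) :
    volume S ≤ ENNReal.ofReal (π * d ^ 2 / 4) := by
  rcases S.eq_empty_or_nonempty with rfl | hne
  · simp
  obtain ⟨z, hz, hmin⟩ := hS.exists_isMinOn hne continuous_snd.continuousOn
  rw [← measure_preimage_add_right volume z S]
  refine volume_le_of_zero_mem_of_forall_nonneg_snd
    (hS.isClosed.measurableSet.preimage (measurable_add_const z)) (by simpa using hz)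
    (fun x hx => by simpa using hmin hx) fun a ha b hb => ?_
  simpa using hd _ ha _ hb

lemma measure_prod_le_mul_measure_image_fst {X : Type*} [MeasurableSpace X] (μ : Measure X)
    {A : Set (X × ℝ)} {h : ℝ} (hA : MeasurableSet A)
    (hfiber : ∀ x t t', (x, t) ∈ A → (x, t') ∈ A → |t' - t| ≤ h) :
    μ.prod volume A ≤ ENNReal.ofReal h * μ (Prod.fst '' A) := by
  rw [Measure.prod_apply hA]
  refine (lintegral_mono fun x => ?_).trans
    (lintegral_indicator_const_le (Prod.fst '' A) (ENNReal.ofReal h))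
  by_cases hx : x ∈ Prod.fst '' A
  · rw [indicator_of_mem hx]
    refine (Real.volume_le_diam _).trans (Metric.ediam_le fun t ht t' ht' => ?_)
    rw [edist_dist, Real.dist_eq, abs_sub_comm]
    exact ofReal_le_ofReal (hfiber x t t' ht ht')
  · have hempty : Prod.mk x ⁻¹' A = ∅ :=
      eq_empty_of_forall_notMem fun t ht => hx ⟨(x, t), ht, rfl⟩
    rw [indicator_of_notMem hx, hempty, measure_empty]

lemma Hdist_nonneg (p q : Heis) : 0 ≤ Hdist p q :=
  (Real.sqrt_nonneg _).trans (le_max_left _ _)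

lemma continuous_Hdist : Continuous fun pq : Heis × Heis => Hdist pq.1 pq.2 := by
  unfold Hdist Hnorm Hmul Hinv
  fun_prop

lemma Hdist_le_HdiamSet {A : Set Heis} (hA : IsCompact A) {p q : Heis}
    (hp : p ∈ A) (hq : q ∈ A) : Hdist p q ≤ HdiamSet A := by
  have hbdd : BddAbove {r : ℝ | ∃ p ∈ A, ∃ q ∈ A, r = Hdist p q} := by
    refine ((hA.prod hA).image continuous_Hdist).bddAbove.mono ?_
    rintro _ ⟨p, hp, q, hq, rfl⟩
    exact ⟨(p, q), ⟨hp, hq⟩, rfl⟩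
  exact le_csSup hbdd ⟨p, hp, q, hq, rfl⟩

lemma sq_dist_fst_le_Hdist_sq (p q : Heis) :
    (p.1.1 - q.1.1) ^ 2 + (p.1.2 - q.1.2) ^ 2 ≤ Hdist q p ^ 2 := by
  refine (Real.sqrt_le_left (Hdist_nonneg q p)).1 (le_of_eq_of_le ?_ (le_max_left _ _))
  simp only [Hmul, Hinv]
  ring_nf

lemma Hdist_vertical_sq (z : ℝ × ℝ) (t t' : ℝ) : Hdist (z, t) (z, t') ^ 2 = |t' - t| := by
  have hvertical : Hmul (Hinv (z, t)) (z, t') = ((0, 0), t' - t) := by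
    simp only [Hmul, Hinv, Prod.mk.injEq]
    refine ⟨⟨?_, ?_⟩, ?_⟩ <;> ring
  rw [Hdist, hvertical, Hnorm]
  simp

/-- a compact subset of the first Heisenberg group whose `d∞`-diameter
is `2` has Lebesgue measure at most `4π = 4·ℒ²(unit disc)`. -/
theorem heisenberg_isodiametric_upper_bound (A : Set Heis)
    (hA : IsCompact A) (hdiam : HdiamSet A = 2) :
    volume A ≤ ENNReal.ofReal (4 * Real.pi) := by
  have hdist : ∀ p ∈ A, ∀ q ∈ A, Hdist p q ^ 2 ≤ 2 ^ 2 := fun p hp q hq =>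
    pow_le_pow_left₀ (Hdist_nonneg p q) (hdiam ▸ Hdist_le_HdiamSet hA hp hq) 2
  have hfiber : ∀ z t t', (z, t) ∈ A → (z, t') ∈ A → |t' - t| ≤ 4 := fun z t t' ht ht' => by
    rw [← Hdist_vertical_sq]
    linarith [hdist _ ht _ ht']
  have hproj : ∀ a ∈ Prod.fst '' A, ∀ b ∈ Prod.fst '' A,
      (a.1 - b.1) ^ 2 + (a.2 - b.2) ^ 2 ≤ 2 ^ 2 := by
    rintro _ ⟨p, hp, rfl⟩ _ ⟨q, hq, rfl⟩
    exact (sq_dist_fst_le_Hdist_sq p q).trans (hdist q hq p hp)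
  calc volume A = volume.prod volume A := by rw [Measure.volume_eq_prod]
    _ ≤ ENNReal.ofReal 4 * volume (Prod.fst '' A) :=
        measure_prod_le_mul_measure_image_fst volume hA.isClosed.measurableSet hfiber
    _ ≤ ENNReal.ofReal 4 * ENNReal.ofReal (π * 2 ^ 2 / 4) := by
        gcongr
        exact volume_le_of_sq_dist_le (hA.image continuous_fst) hproj
    _ = ENNReal.ofReal (4 * π) := by
        rw [← ofReal_mul (by norm_num)]
        ring_nf
end
end
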